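/- Let c > 0, a ∈ {0,1}, and let I ⊆ ℕ_{≥1} be a set of indices. For each i ∈ I let x_i ∈ ℝ_{≥0}^k, q_i ∈ [0,1]^k and p_i ∈ ℝ, and set q_0 := 0, p_0 := 0. Suppose: (individual rationality) x_i·q_i − p_i ≥ 0 for each i ∈ I; (incentive compatibility) x_i·q_i − p_i ≥ x_i·q_j − p_j for all i,j ∈ I with j < i; and (dyadic prices) p_i ∈ [c·2^{2(i−1)+a}, c·2^{2(i−1)+a+1}) for each i ∈ I. Then for every i ∈ I, min_{j ∈ I∪{0}, j < i} x_i·(q_i − q_j) ≥ p_i/2. -/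
import Mathlib


open scoped BigOperators

noncomputable section

namespace Stmt6

/-- Valuation / allocation vectors over `k` items. -/
abbrev V (k : ℕ) := Fin k → ℝ

/-- Dot product. -/
def dot {k : ℕ} (x y : V k) : ℝ := ∑ t, x t * y t

theorem stmt6 (k : ℕ) (c : ℝ) (hc : 0 < c) (a : ℕ) (ha : a = 0 ∨ a = 1)
    (I : Set ℕ) (hI : ∀ i ∈ I, 1 ≤ i)
    (x q : ℕ → V k) (p : ℕ → ℝ)
    (hx : ∀ i ∈ I, ∀ t, 0 ≤ x i t)
    (hqr : ∀ i ∈ I, ∀ t, q i t ∈ Set.Icc (0:ℝ) 1)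
    (hq0 : q 0 = 0) (hp0 : p 0 = 0)
    (hIR : ∀ i ∈ I, 0 ≤ dot (x i) (q i) - p i)
    (hIC : ∀ i ∈ I, ∀ j ∈ I, j < i →
      dot (x i) (q j) - p j ≤ dot (x i) (q i) - p i)
    (hprice : ∀ i ∈ I,
      p i ∈ Set.Ico (c * 2 ^ (2*(i-1)+a)) (c * 2 ^ (2*(i-1)+a+1))) :
    ∀ i ∈ I, ∀ j : ℕ, (j ∈ I ∨ j = 0) → j < i →
      p i / 2 ≤ dot (x i) (q i - q j) := by
  intro i hi j hj hji
  have hdot : dot (x i) (q i - q j) = dot (x i) (q i) - dot (x i) (q j) := by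
    simp [dot, mul_sub, Finset.sum_sub_distrib]
  have hpi := hprice i hi
  have hpi_lb : c * 2 ^ (2*(i-1)+a) ≤ p i := hpi.1
  have hpi_pos : 0 < p i :=
    lt_of_lt_of_le (by positivity) hpi_lb
  rcases hj with hjI | rfl
  · -- j ∈ I, j < i
    have hIC' := hIC i hi j hjI hji
    have hpj := hprice j hjI
    -- key: 2 * p j ≤ p i
    have hj1 : 1 ≤ j := hI j hjI
    have hexp : 2*(j-1)+a+1+1 ≤ 2*(i-1)+a := by omega
    have h2 : (2:ℝ) ^ (2*(j-1)+a+1) * 2 ≤ 2 ^ (2*(i-1)+a) := by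
      calc (2:ℝ) ^ (2*(j-1)+a+1) * 2 = 2 ^ (2*(j-1)+a+1+1) := by ring
        _ ≤ 2 ^ (2*(i-1)+a) := by
            exact pow_le_pow_right₀ (by norm_num) hexp
    have hkey : 2 * p j ≤ p i := by
      have := hpj.2
      nlinarith [hpi_lb]
    have h1 : p i - p j ≤ dot (x i) (q i) - dot (x i) (q j) := by linarith
    rw [hdot]; linarith
  · -- j = 0
    rw [hdot, hq0]
    have : dot (x i) (0 : V k) = 0 := by simp [dot]
    rw [this]
    have := hIR i hi
    linarith

end Stmt6
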